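/- arXiv:1510.00909 — 2 statements merged into one kernel-verified Lean document; each statement's English description precedes it below -/
import Mathlib

section
/- Define inductively multilinear forms T_m : (ℝ^{2^{m-1}})^m → ℝ by T₂(x,y) = x₁y₁+x₁y₂+x₂y₁-x₂y₂ and T_m(x⁽¹⁾,...,x⁽ᵐ⁾) = (x₁⁽ᵐ⁾+x₂⁽ᵐ⁾)T_{m-1}(x⁽¹⁾,...,x⁽ᵐ⁻¹⁾) + (x₁⁽ᵐ⁾-x₂⁽ᵐ⁾)T_{m-1}(B^{2^{m-2}}x⁽¹⁾, B^{2^{m-2}}x⁽²⁾, B^{2^{m-3}}x⁽³⁾, ..., B²x⁽ᵐ⁻¹⁾), where B is the backward shift. Then ‖T_m‖ = 2^{m-1}, where the norm is the supremum over the unit ball of (ℓ∞^{2^{m-1}})^m. -/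
/-- The iterated mixed `ℓ_{q₁}(ℓ_{q₂}(⋯ℓ_{q_m}))` norm of an `m`-indexed array
`f` with indices ranging over `{0, ..., N-1}`:
`(Σ_{j₁<N}(⋯(Σ_{j_m<N}|f(j₁,...,j_m)|^{q_m})^{q_{m-1}/q_m}⋯)^{q₁/q₂})^{1/q₁}`. -/
noncomputable def mixedNorm : (m : ℕ) → (N : ℕ) → (ℕ → ℝ) → ((ℕ → ℕ) → ℝ) → ℝ
  | 0, _, _, f => |f fun _ => 0|
  | m + 1, N, q, f =>
      (∑ j : Fin N, (mixedNorm m N (fun i => q (i + 1))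
          (fun idx => f (fun i => if i = 0 then (j : ℕ) else idx (i - 1)))) ^ q 0)
        ^ (1 / q 0)

/-- The `j`-th canonical basis vector of `ℝⁿ` (interpreted as `0` if `j ≥ n`). -/
def eVec (n : ℕ) (j : ℕ) : Fin n → ℝ := fun i => if (i : ℕ) = j then 1 else 0

/-- The supremum norm of an `m`-linear form on `(ℓ∞ⁿ)^m`. -/
noncomputable def supNorm (m n : ℕ)
    (T : MultilinearMap ℝ (fun _ : Fin m => (Fin n → ℝ)) ℝ) : ℝ :=
  sSup {v : ℝ | ∃ x : Fin m → Fin n → ℝ, (∀ i, ‖x i‖ ≤ 1) ∧ v = |T x|}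

/-- The shift exponents in the inductive definition of `T_m`. -/
def Tshift (m k : ℕ) : ℕ := if k ≤ 1 then 2 ^ (m - 1) else 2 ^ (m - k)

/-- The inductively defined `m`-linear forms `T_m` of Diniz et al.:
`T₂(x,y) = x₁y₁ + x₁y₂ + x₂y₁ - x₂y₂` and
`T_{m+1}(x⁽¹⁾,...,x⁽ᵐ⁺¹⁾) = (x₁⁽ᵐ⁺¹⁾+x₂⁽ᵐ⁺¹⁾)T_m(x⁽¹⁾,...,x⁽ᵐ⁾)
  + (x₁⁽ᵐ⁺¹⁾-x₂⁽ᵐ⁺¹⁾)T_m(B^{2^{m-1}}x⁽¹⁾, B^{2^{m-1}}x⁽²⁾, B^{2^{m-2}}x⁽³⁾, ..., B²x⁽ᵐ⁾)`,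
where `B` is the backward shift. The `k`-th argument (0-indexed) is `x k : ℕ → ℝ`. -/
noncomputable def Tform : ℕ → (ℕ → ℕ → ℝ) → ℝ
  | 0, _ => 0
  | 1, x => x 0 0
  | 2, x => x 0 0 * x 1 0 + x 0 0 * x 1 1 + x 0 1 * x 1 0 - x 0 1 * x 1 1
  | m + 3, x =>
      (x (m + 2) 0 + x (m + 2) 1) * Tform (m + 2) x
        + (x (m + 2) 0 - x (m + 2) 1)
            * Tform (m + 2) (fun k j => x k (j + Tshift (m + 2) k))

/-!
Write `T_m = (a + b) U + (a - b) V`, where `a, b` are the first two coordinates of the last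
argument and `U, V` are values of `T_{m-1}` at points of the unit ball. Since
`|a + b| + |a - b| = 2 max(|a|, |b|) ≤ 2`, induction gives `|T_m| ≤ 2^{m-1}`. At the all-ones
point `a - b = 0`, so `T_m = 2 T_{m-1}` there and the bound is attained.
-/

lemma abs_add_add_abs_sub_le_two {a b : ℝ} (ha : |a| ≤ 1) (hb : |b| ≤ 1) :
    |a + b| + |a - b| ≤ 2 := by
  rw [abs_le] at ha hb
  rcases abs_cases (a + b) with ⟨h₁, _⟩ | ⟨h₁, _⟩ <;>
    rcases abs_cases (a - b) with ⟨h₂, _⟩ | ⟨h₂, _⟩ <;> linarith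

lemma abs_add_mul_add_sub_mul_le {a b u v M : ℝ} (ha : |a| ≤ 1) (hb : |b| ≤ 1)
    (hu : |u| ≤ M) (hv : |v| ≤ M) : |(a + b) * u + (a - b) * v| ≤ 2 * M := by
  have hM : 0 ≤ M := (abs_nonneg u).trans hu
  calc |(a + b) * u + (a - b) * v| ≤ |a + b| * |u| + |a - b| * |v| := by
        simpa only [abs_mul] using abs_add_le ((a + b) * u) ((a - b) * v)
    _ ≤ |a + b| * M + |a - b| * M := by gcongr
    _ = (|a + b| + |a - b|) * M := by ring
    _ ≤ 2 * M := by gcongr; exact abs_add_add_abs_sub_le_two ha hb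

theorem abs_Tform_le : (m : ℕ) → (x : ℕ → ℕ → ℝ) → (∀ k j, |x k j| ≤ 1) →
    |Tform m x| ≤ 2 ^ (m - 1)
  | 0, _, _ => by simp [Tform]
  | 1, x, hx => by simpa [Tform] using hx 0 0
  | 2, x, hx => by
    have h : Tform 2 x = (x 0 0 + x 0 1) * x 1 0 + (x 0 0 - x 0 1) * x 1 1 := by
      simp only [Tform]; ring
    simpa [h] using abs_add_mul_add_sub_mul_le (hx 0 0) (hx 0 1) (hx 1 0) (hx 1 1)
  | m + 3, x, hx => by
    have hU := abs_Tform_le (m + 2) x hx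
    have hV := abs_Tform_le (m + 2) (fun k j => x k (j + Tshift (m + 2) k)) fun k _ => hx k _
    rw [Tform, show m + 3 - 1 = m + 2 - 1 + 1 by omega, pow_succ']
    exact abs_add_mul_add_sub_mul_le (hx _ 0) (hx _ 1) hU hV

theorem Tform_succ_one (m : ℕ) : Tform (m + 1) (fun _ _ => 1) = 2 ^ m := by
  induction m with
  | zero => simp [Tform]
  | succ m ih =>
    rcases m with _ | m
    · norm_num [Tform]
    · rw [Tform, ih]
      ring

/-- The supremum norm of `T_m` over the unit ball of `(ℓ∞)^m` equals `2^{m-1}`. -/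
theorem stmt_6 (m : ℕ) (hm : 2 ≤ m) :
    sSup {v : ℝ | ∃ x : ℕ → ℕ → ℝ, (∀ k j, |x k j| ≤ 1) ∧ v = |Tform m x|}
      = 2 ^ (m - 1) := by
  refine IsGreatest.csSup_eq ⟨⟨fun _ _ => 1, fun _ _ => by simp, ?_⟩, ?_⟩
  · obtain ⟨n, rfl⟩ : ∃ n, m = n + 1 := ⟨m - 1, by omega⟩
    rw [Tform_succ_one, abs_of_pos (by positivity), Nat.add_sub_cancel]
  · rintro v ⟨x, hx, rfl⟩
    exact abs_Tform_le m x hx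
end

section
/- For m ≥ 2 and q₁,...,q_m ∈ [1,2] with Σ 1/qᵢ = (m+1)/2, any constant C satisfying the mixed-norm inequality with exponents (q₁,...,q_m) for all real m-linear forms on (ℓ∞ⁿ)^m satisfies C ≥ 2^{((m-1)q̂₂ + Σ_{i≠2}q̂ᵢ - (m-1)q₁⋯q_m)/(q₁⋯q_m)}, where q̂ᵢ = (q₁⋯q_m)/qᵢ. -/
/-!
The witness is the form `T x = ∑_ε x_{i₀}(ε) ∏_{k ≠ i₀} (x_k(0) ± x_k(1))`, where `ε` runs over
all sign patterns on the coordinates `k ≠ i₀` (identified with the `2^{m-1}` indices of `ℓ∞`)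
and `ε_k` chooses the sign of the `k`-th factor. Since every pattern occurs exactly once, the sum
of the absolute values of the terms factorises as `∏_{k ≠ i₀} (|a_k + b_k| + |a_k - b_k|)`, so
`‖T‖ ≤ 2^{m-1}`. On the other hand `|T(e_{j₁}, …, e_{j_m})|` is the indicator of the box
`j_{i₀} < 2^{m-1}`, `j_k < 2` for `k ≠ i₀`, and the mixed norm of a box indicator is
`∏ₖ (side length)^{1/q_k}`. Taking `i₀` to be the second coordinate gives
`2^{(m-1)/q₂ + Σ_{k≠2} 1/q_k} ≤ C · 2^{m-1}`.
-/

open Finset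

theorem mixedNorm_eq_mul_prod {N : ℕ} (g : ℕ → ℕ → ℝ) (hg : ∀ k j, 0 ≤ g k j) :
    ∀ (m : ℕ) (q : ℕ → ℝ) (c : ℝ) (f : (ℕ → ℕ) → ℝ), (∀ k < m, q k ≠ 0) → 0 ≤ c →
      (∀ idx, |f idx| = c * ∏ k ∈ range m, g k (idx k)) →
      mixedNorm m N q f = c * ∏ k ∈ range m, (∑ j : Fin N, g k j ^ q k) ^ (1 / q k)
  | 0, q, c, f, _, _, hf => by simpa [mixedNorm] using hf fun _ => 0
  | m + 1, q, c, f, hq, hc, hf => by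
    have hq0 : q 0 ≠ 0 := hq 0 m.succ_pos
    set P := ∏ k ∈ range m, (∑ j : Fin N, g (k + 1) j ^ q (k + 1)) ^ (1 / q (k + 1))
    have hnorm : ∀ k, 0 ≤ ∑ j : Fin N, g k j ^ q k :=
      fun k => sum_nonneg fun j _ => Real.rpow_nonneg (hg k j) _
    have hP : 0 ≤ P := prod_nonneg fun k _ => Real.rpow_nonneg (hnorm _) _
    have hrow : ∀ j : Fin N, mixedNorm m N (fun i => q (i + 1))
        (fun idx => f (fun i => if i = 0 then (j : ℕ) else idx (i - 1))) = c * g 0 j * P :=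
      fun j => mixedNorm_eq_mul_prod (fun k => g (k + 1)) (fun k => hg (k + 1)) m _ _ _
        (fun k hk => hq (k + 1) (by omega)) (mul_nonneg hc (hg 0 j))
        (fun idx => by rw [hf, prod_range_succ']; simp [mul_comm, mul_assoc])
    have hsum : ∑ j : Fin N, (c * g 0 j * P) ^ q 0 =
        (∑ j : Fin N, g 0 j ^ q 0) * (c * P) ^ q 0 := by
      rw [sum_mul]
      refine sum_congr rfl fun j _ => ?_
      rw [← Real.mul_rpow (hg 0 j) (mul_nonneg hc hP)]
      ring_nf
    simp only [mixedNorm, hrow, hsum, prod_range_succ']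
    rw [Real.mul_rpow (hnorm 0) (Real.rpow_nonneg (mul_nonneg hc hP) _), one_div,
      Real.rpow_rpow_inv (mul_nonneg hc hP) hq0]
    ring

theorem sum_indicator_lt_rpow {N w : ℕ} (hw : w ≤ N) {q : ℝ} (hq : q ≠ 0) :
    ∑ j : Fin N, (if (j : ℕ) < w then (1 : ℝ) else 0) ^ q = w := by
  simp only [apply_ite (· ^ q), Real.one_rpow, Real.zero_rpow hq]
  rw [Fin.sum_univ_eq_sum_range (fun j => if j < w then (1 : ℝ) else 0), sum_boole]
  have hfilter : {j ∈ range N | j < w} = range w := by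
    ext j
    simp only [mem_filter, mem_range]
    omega
  rw [hfilter, card_range]

theorem supNorm_nonneg {m n : ℕ} (T : MultilinearMap ℝ (fun _ : Fin m => (Fin n → ℝ)) ℝ) :
    0 ≤ supNorm m n T :=
  Real.sSup_nonneg (by rintro _ ⟨x, -, rfl⟩; exact abs_nonneg _)

section PmFunctional

variable {n : ℕ} [NeZero n]

def pmFunctional (s : Bool) : (Fin n → ℝ) →ₗ[ℝ] ℝ :=
  LinearMap.proj 0 + (if s then -1 else 1 : ℝ) • LinearMap.proj 1

theorem pmFunctional_apply (s : Bool) (y : Fin n → ℝ) :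
    pmFunctional s y = y 0 + (if s then -1 else 1) * y 1 := rfl

theorem sum_abs_pmFunctional_le (y : Fin n → ℝ) (hy : ∀ j, |y j| ≤ 1) :
    ∑ s : Bool, |pmFunctional s y| ≤ 2 := by
  have h0 := abs_le.mp (hy 0)
  have h1 := abs_le.mp (hy 1)
  simp only [Fintype.sum_bool, pmFunctional_apply, if_true, Bool.false_eq_true, if_false,
    neg_one_mul, one_mul]
  cases abs_cases (y 0 + -y 1) <;> cases abs_cases (y 0 + y 1) <;> linarith

theorem abs_pmFunctional_eVec (hn : 2 ≤ n) (s : Bool) (i : ℕ) :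
    |pmFunctional s (eVec n i)| = if i < 2 then 1 else 0 := by
  have h1 : ((1 : Fin n) : ℕ) = 1 := by rw [Fin.val_one', Nat.mod_eq_of_lt hn]
  simp only [pmFunctional_apply, eVec, Fin.val_zero, h1]
  rcases (by omega : i = 0 ∨ i = 1 ∨ 2 ≤ i) with rfl | rfl | hi
  · cases s <;> simp
  · cases s <;> simp
  · simp [show 0 ≠ i by omega, show 1 ≠ i by omega, show ¬ i < 2 by omega]

end PmFunctional

section TestForm

variable {m : ℕ} (i₀ : Fin m)

noncomputable def signPattern : Fin (2 ^ (m - 1)) ≃ ({k // k ≠ i₀} → Bool) :=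
  (Fintype.equivFinOfCardEq (by simp)).symm

noncomputable def testForm : MultilinearMap ℝ (fun _ : Fin m => Fin (2 ^ (m - 1)) → ℝ) ℝ :=
  ∑ j, (MultilinearMap.mkPiAlgebra ℝ (Fin m) ℝ).compLinearMap fun k =>
    if h : k = i₀ then LinearMap.proj j else pmFunctional (signPattern i₀ j ⟨k, h⟩)

theorem testForm_apply (x : Fin m → Fin (2 ^ (m - 1)) → ℝ) :
    testForm i₀ x =
      ∑ j, x i₀ j * ∏ k : {k // k ≠ i₀}, pmFunctional (signPattern i₀ j k) (x k) := by
  simp only [testForm, _root_.sum_apply, MultilinearMap.compLinearMap_apply,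
    MultilinearMap.mkPiAlgebra_apply]
  refine sum_congr rfl fun j _ => ?_
  rw [Fintype.prod_eq_mul_prod_subtype_ne _ i₀, dif_pos rfl]
  exact congrArg _ (prod_congr rfl fun k _ => by rw [dif_neg k.2])

theorem abs_testForm_le (x : Fin m → Fin (2 ^ (m - 1)) → ℝ) (hx : ∀ k j, |x k j| ≤ 1) :
    |testForm i₀ x| ≤ 2 ^ (m - 1) :=
  calc |testForm i₀ x|
      ≤ ∑ j, |x i₀ j| *
          ∏ k : {k // k ≠ i₀}, |pmFunctional (signPattern i₀ j k) (x k)| := by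
        rw [testForm_apply]
        refine (abs_sum_le_sum_abs _ _).trans (le_of_eq (sum_congr rfl fun j _ => ?_))
        rw [abs_mul, abs_prod]
    _ ≤ ∑ j, ∏ k : {k // k ≠ i₀}, |pmFunctional (signPattern i₀ j k) (x k)| :=
        sum_le_sum fun j _ =>
          mul_le_of_le_one_left (prod_nonneg fun _ _ => abs_nonneg _) (hx i₀ j)
    _ = ∏ k : {k // k ≠ i₀}, ∑ s : Bool, |pmFunctional s (x k)| := by
        rw [Fintype.prod_sum]
        exact (signPattern i₀).sum_comp fun ε => ∏ k, |pmFunctional (ε k) (x k)|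
    _ ≤ ∏ _k : {k // k ≠ i₀}, (2 : ℝ) :=
        prod_le_prod (fun _ _ => sum_nonneg fun _ _ => abs_nonneg _)
          fun k _ => sum_abs_pmFunctional_le _ (hx k)
    _ = 2 ^ (m - 1) := by simp

theorem supNorm_testForm_le : supNorm m _ (testForm i₀) ≤ 2 ^ (m - 1) := by
  refine Real.sSup_le ?_ (by positivity)
  rintro _ ⟨x, hx, rfl⟩
  exact abs_testForm_le i₀ x fun k j => (norm_le_pi_norm (x k) j).trans (hx k)

theorem abs_testForm_eVec (hm : 2 ≤ m) (idx : ℕ → ℕ) :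
    |testForm i₀ (fun k => eVec _ (idx k))| =
      ∏ k : Fin m, if idx k < (if k = i₀ then 2 ^ (m - 1) else 2) then (1 : ℝ) else 0 := by
  have hn : 2 ≤ 2 ^ (m - 1) := Nat.one_lt_two_pow (by omega)
  rw [testForm_apply, Fintype.prod_eq_mul_prod_subtype_ne _ i₀, if_pos rfl,
    prod_congr rfl fun (k : {k // k ≠ i₀}) _ => by rw [if_neg k.2]]
  by_cases h : idx i₀ < 2 ^ (m - 1)
  · rw [sum_eq_single ⟨idx i₀, h⟩ (fun j _ hj => by simp [eVec, Fin.ext_iff.not.mp hj])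
      (by simp)]
    simp [eVec, abs_prod, abs_pmFunctional_eVec hn, h]
  · have hzero : ∀ j : Fin (2 ^ (m - 1)), eVec _ (idx i₀) j = 0 := fun j => by
      simp only [eVec]
      exact if_neg (by omega)
    simp [hzero, h]

theorem mixedNorm_testForm (hm : 2 ≤ m) (q : ℕ → ℝ) (hq : ∀ k < m, q k ≠ 0) :
    mixedNorm m (2 ^ (m - 1)) q (fun idx => testForm ⟨1, hm⟩ fun k => eVec _ (idx k)) =
      ∏ k ∈ range m, ((if k = 1 then 2 ^ (m - 1) else 2 : ℕ) : ℝ) ^ (1 / q k) := by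
  have hn : 2 ≤ 2 ^ (m - 1) := Nat.one_lt_two_pow (by omega)
  rw [mixedNorm_eq_mul_prod (fun k j => if j < (if k = 1 then 2 ^ (m - 1) else 2) then 1 else 0)
    (fun k j => by split_ifs <;> norm_num) m q 1 _ hq zero_le_one, one_mul]
  · exact prod_congr rfl fun k hk => by
      rw [sum_indicator_lt_rpow (by split_ifs <;> omega) (hq k (mem_range.1 hk))]
  · intro idx
    rw [one_mul, abs_testForm_eVec _ hm, ← Fin.prod_univ_eq_prod_range
      (fun k => if idx k < (if k = 1 then 2 ^ (m - 1) else 2) then (1 : ℝ) else 0)]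
    simp [Fin.ext_iff]

end TestForm

theorem prod_side_rpow_eq_two_rpow {m : ℕ} (hm : 2 ≤ m) (q : ℕ → ℝ) :
    ∏ k ∈ range m, ((if k = 1 then 2 ^ (m - 1) else 2 : ℕ) : ℝ) ^ (1 / q k) =
      (2 : ℝ) ^ (((m : ℝ) - 1) * (1 / q 1) + ∑ k ∈ (range m).erase 1, 1 / q k) := by
  rw [← mul_prod_erase _ _ (mem_range.2 (by omega : 1 < m)), if_pos rfl,
    prod_congr rfl fun k hk => by rw [if_neg (ne_of_mem_erase hk)],
    Real.rpow_add two_pos, Real.rpow_sum_of_pos two_pos, Real.rpow_mul zero_le_two]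
  push_cast
  rw [← Real.rpow_natCast, Nat.cast_pred (by omega)]

theorem exponent_div_prod_eq {m : ℕ} (q : ℕ → ℝ) (hQ : ∏ i ∈ range m, q i ≠ 0) :
    (((m : ℝ) - 1) * ((∏ i ∈ range m, q i) / q 1)
        + ∑ i ∈ (range m).erase 1, (∏ i ∈ range m, q i) / q i
        - ((m : ℝ) - 1) * ∏ i ∈ range m, q i) / ∏ i ∈ range m, q i
      = ((m : ℝ) - 1) * (1 / q 1) + ∑ i ∈ (range m).erase 1, 1 / q i - ((m : ℝ) - 1) := by
  simp only [sub_div, add_div, mul_div_assoc, div_div_cancel_left' hQ, sum_div, div_self hQ,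
    mul_one, one_div]

theorem stmt_12_general (m : ℕ) (hm : 2 ≤ m) (q : ℕ → ℝ)
    (hq : ∀ i < m, q i ∈ Set.Icc (1:ℝ) 2)
    (C : ℝ)
    (hC : ∀ n : ℕ, ∀ T : MultilinearMap ℝ (fun _ : Fin m => (Fin n → ℝ)) ℝ,
      mixedNorm m n q (fun idx => T fun k => eVec n (idx (k : ℕ)))
        ≤ C * supNorm m n T) :
    (2:ℝ) ^ ((((m : ℝ) - 1) * ((∏ i ∈ Finset.range m, q i) / q 1)
        + (∑ i ∈ (Finset.range m).erase 1, (∏ i ∈ Finset.range m, q i) / q i)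
        - ((m : ℝ) - 1) * ∏ i ∈ Finset.range m, q i)
      / ∏ i ∈ Finset.range m, q i) ≤ C := by
  have hq0 : ∀ k < m, q k ≠ 0 := fun k hk => (zero_lt_one.trans_le (hq k hk).1).ne'
  have hQ : ∏ i ∈ range m, q i ≠ 0 := prod_ne_zero_iff.2 fun k hk => hq0 k (mem_range.1 hk)
  have hnorm : (2 : ℝ) ^ ((m : ℝ) - 1) = 2 ^ (m - 1) := by
    rw [← Nat.cast_pred (by omega), Real.rpow_natCast]
  set T := testForm (⟨1, hm⟩ : Fin m)
  have hlow := hC _ T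
  rw [mixedNorm_testForm hm q hq0, prod_side_rpow_eq_two_rpow hm] at hlow
  have hup : supNorm m _ T ≤ 2 ^ (m - 1) := supNorm_testForm_le _
  have hC0 : 0 ≤ C :=
    (pos_of_mul_pos_left ((Real.rpow_pos_of_pos two_pos _).trans_le hlow) (supNorm_nonneg T)).le
  rw [exponent_div_prod_eq q hQ, Real.rpow_sub two_pos, hnorm, div_le_iff₀ (by positivity)]
  exact hlow.trans (mul_le_mul_of_nonneg_left hup hC0)

/-- Lower bound for the constants of the generalized mixed-norm inequality,
second version: if `Σ 1/qᵢ = (m+1)/2` and the mixed-norm inequality with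
exponents `(q₁,...,q_m)` holds with constant `C` for all real `m`-linear
forms on `(ℓ∞ⁿ)^m` and all `n`, then
`C ≥ 2^{((m-1)q̂₂ + Σ_{i≠2} q̂ᵢ - (m-1)q₁⋯q_m)/(q₁⋯q_m)}` where
`q̂ᵢ = (q₁⋯q_m)/qᵢ`. -/
theorem stmt_12 (m : ℕ) (hm : 2 ≤ m) (q : ℕ → ℝ)
    (hq : ∀ i < m, q i ∈ Set.Icc (1:ℝ) 2)
    (hsum : ∑ i ∈ Finset.range m, 1 / q i = ((m : ℝ) + 1) / 2)
    (C : ℝ)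
    (hC : ∀ n : ℕ, ∀ T : MultilinearMap ℝ (fun _ : Fin m => (Fin n → ℝ)) ℝ,
      mixedNorm m n q (fun idx => T fun k => eVec n (idx (k : ℕ)))
        ≤ C * supNorm m n T) :
    (2:ℝ) ^ ((((m : ℝ) - 1) * ((∏ i ∈ Finset.range m, q i) / q 1)
        + (∑ i ∈ (Finset.range m).erase 1, (∏ i ∈ Finset.range m, q i) / q i)
        - ((m : ℝ) - 1) * ∏ i ∈ Finset.range m, q i)
      / ∏ i ∈ Finset.range m, q i) ≤ C :=
  stmt_12_general m hm q hq C hC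
end
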